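/- arXiv:1709.08323 — 12 statements merged into one kernel-verified Lean document; each statement's English description precedes it below -/
import Mathlib

section
/- Let M be a monoid and let x be an element of the submonoid of M generated by the set of idempotents of M. If x is a left unit (i.e., a·x = 1 for some a ∈ M), then x = 1. The same conclusion holds if x is a right unit. -/
/-- If an element of the idempotent-generated submonoid of a monoid is a left unit
(or a right unit), then it equals the identity. -/
theorem stmt_3 (M : Type*) [Monoid M] (x : M)
    (hx : x ∈ Submonoid.closure {e : M | e * e = e}) :
    ((∃ a, a * x = 1) → x = 1) ∧ ((∃ b, x * b = 1) → x = 1) := by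
  induction hx using Submonoid.closure_induction with
  | mem e he =>
    constructor
    · rintro ⟨a, ha⟩
      calc e = 1 * e := (one_mul e).symm
        _ = a * e * e := by rw [ha]
        _ = a * e := by rw [mul_assoc, he]
        _ = 1 := ha
    · rintro ⟨b, hb⟩
      calc e = e * 1 := (mul_one e).symm
        _ = e * (e * b) := by rw [hb]
        _ = e * e * b := by rw [mul_assoc]
        _ = e * b := by rw [he]
        _ = 1 := hb
  | one => exact ⟨fun _ => rfl, fun _ => rfl⟩
  | mul y z _ _ hy hz =>
    constructor
    · rintro ⟨a, ha⟩
      have hz1 : z = 1 := hz.1 ⟨a * y, by rw [mul_assoc]; exact ha⟩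
      have hy1 : y = 1 := hy.1 ⟨a, by rw [hz1, mul_one] at ha; exact ha⟩
      rw [hy1, hz1, one_mul]
    · rintro ⟨b, hb⟩
      have hy1 : y = 1 := hy.2 ⟨z * b, by rw [← mul_assoc]; exact hb⟩
      have hz1 : z = 1 := hz.2 ⟨b, by rw [hy1, one_mul] at hb; exact hb⟩
      rw [hy1, hz1, one_mul]
end

section
/- Let M be a monoid, let E(M) be its set of idempotents and G_L(M) its set of left units. Then the submonoid of M generated by E(M) ∪ G_L(M) is exactly the set of products e·g where e lies in the submonoid generated by E(M) and g ∈ G_L(M). -/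
/-- Swap lemma: a left unit can be moved past any element of `⟨E(M)⟩`. -/
lemma swap_aux {M : Type*} [Monoid M] {x : M}
    (hx : x ∈ Submonoid.closure {e : M | e * e = e}) :
    ∀ g a : M, a * g = 1 →
      ∃ f ∈ Submonoid.closure {e : M | e * e = e}, g * x = f * g := by
  induction hx using Submonoid.closure_induction with
  | mem e he =>
      intro g a hag
      have hee : e * e = e := he
      refine ⟨g * e * a, Submonoid.subset_closure ?_, ?_⟩
      · show (g * e * a) * (g * e * a) = g * e * a
        have : e * (a * g) * e = e := by rw [hag]; simp [hee]
        calc (g * e * a) * (g * e * a) = g * (e * (a * g) * e) * a := by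
              simp [mul_assoc]
          _ = g * e * a := by rw [this]
      · calc g * e = g * e * (a * g) := by rw [hag]; simp
          _ = g * e * a * g := by simp [mul_assoc]
  | one =>
      intro g a hag
      exact ⟨1, Submonoid.one_mem _, by simp⟩
  | mul x y hx hy ihx ihy =>
      intro g a hag
      obtain ⟨f1, hf1, h1⟩ := ihx g a hag
      obtain ⟨f2, hf2, h2⟩ := ihy g a hag
      exact ⟨f1 * f2, Submonoid.mul_mem _ hf1 hf2, by
        rw [← mul_assoc, h1, mul_assoc, h2, ← mul_assoc]⟩

/-- `⟨E(M) ∪ G_L(M)⟩ = ⟨E(M)⟩ · G_L(M)`. -/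
theorem stmt_6 (M : Type*) [Monoid M] :
    (Submonoid.closure ({e : M | e * e = e} ∪ {g : M | ∃ a, a * g = 1}) : Set M) =
      {x : M | ∃ e ∈ Submonoid.closure {e : M | e * e = e},
        ∃ g : M, (∃ a, a * g = 1) ∧ x = e * g} := by
  ext x
  constructor
  · intro hx
    induction hx using Submonoid.closure_induction with
    | mem y hy =>
        rcases hy with hy | hy
        · exact ⟨y, Submonoid.subset_closure hy, 1, ⟨1, by simp⟩, by simp⟩
        · exact ⟨1, Submonoid.one_mem _, y, hy, by simp⟩
    | one => exact ⟨1, Submonoid.one_mem _, 1, ⟨1, by simp⟩, by simp⟩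
    | mul u v hu hv ihu ihv =>
        obtain ⟨e, he, g, ⟨a, hag⟩, rfl⟩ := ihu
        obtain ⟨e', he', g', ⟨b, hbg⟩, rfl⟩ := ihv
        obtain ⟨f, hf, hswap⟩ := swap_aux he' g a hag
        refine ⟨e * f, Submonoid.mul_mem _ he hf, g * g', ⟨b * a, ?_⟩, ?_⟩
        · calc b * a * (g * g') = b * (a * g) * g' := by simp [mul_assoc]
            _ = 1 := by rw [hag]; simp [hbg]
        · calc e * g * (e' * g') = e * (g * e') * g' := by simp [mul_assoc]
            _ = e * f * (g * g') := by rw [hswap]; simp [mul_assoc]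
  · rintro ⟨e, he, g, hg, rfl⟩
    exact Submonoid.mul_mem _
      (Submonoid.closure_mono Set.subset_union_left he)
      (Submonoid.subset_closure (Or.inr hg))
end

section
/- Let M be a monoid, let E(M) be its set of idempotents and G(M) its set of units. Then the submonoid of M generated by E(M) ∪ G(M) is exactly the set of products e·g with e in the submonoid generated by E(M) and g a unit, and it is also exactly the set of products g·e with g a unit and e in the submonoid generated by E(M). -/
private lemma conj_mem_closure_idem {M : Type*} [Monoid M] (u : Mˣ) (x : M)
    (hx : x ∈ Submonoid.closure {e : M | e * e = e}) :
    (u : M) * x * ↑u⁻¹ ∈ Submonoid.closure {e : M | e * e = e} := by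
  induction hx using Submonoid.closure_induction with
  | mem a ha =>
    apply Submonoid.subset_closure
    show ((u : M) * a * ↑u⁻¹) * ((u : M) * a * ↑u⁻¹) = (u : M) * a * ↑u⁻¹
    calc ((u : M) * a * ↑u⁻¹) * ((u : M) * a * ↑u⁻¹)
        = (u : M) * (a * a) * ↑u⁻¹ := by
          simp [mul_assoc]
      _ = (u : M) * a * ↑u⁻¹ := by rw [ha]
  | one => simpa using Submonoid.one_mem _
  | mul x y _ _ ihx ihy =>
    have h : ((u : M) * x * ↑u⁻¹) * ((u : M) * y * ↑u⁻¹) = (u : M) * (x * y) * ↑u⁻¹ := by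
      simp [mul_assoc]
    have := Submonoid.mul_mem _ ihx ihy
    rwa [h] at this
/-- `⟨E(M) ∪ G(M)⟩ = ⟨E(M)⟩ · G(M) = G(M) · ⟨E(M)⟩`. -/
theorem stmt_7 (M : Type*) [Monoid M] :
    ((Submonoid.closure ({e : M | e * e = e} ∪ {g : M | IsUnit g}) : Set M) =
      {x : M | ∃ e ∈ Submonoid.closure {e : M | e * e = e},
        ∃ g : M, IsUnit g ∧ x = e * g}) ∧
    ((Submonoid.closure ({e : M | e * e = e} ∪ {g : M | IsUnit g}) : Set M) =
      {x : M | ∃ g : M, IsUnit g ∧ ∃ e ∈ Submonoid.closure {e : M | e * e = e},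
        x = g * e}) := by
  have hEle : Submonoid.closure {e : M | e * e = e} ≤
      Submonoid.closure ({e : M | e * e = e} ∪ {g : M | IsUnit g}) :=
    Submonoid.closure_mono Set.subset_union_left
  have hGmem : ∀ g : M, IsUnit g →
      g ∈ Submonoid.closure ({e : M | e * e = e} ∪ {g : M | IsUnit g}) := fun g hg =>
    Submonoid.subset_closure (Set.mem_union_right _ hg)
  constructor
  · apply Set.Subset.antisymm
    · intro x hx
      induction hx using Submonoid.closure_induction with
      | mem a ha =>
        rcases ha with ha | ha
        · exact ⟨a, Submonoid.subset_closure ha, 1, isUnit_one, (mul_one a).symm⟩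
        · exact ⟨1, Submonoid.one_mem _, a, ha, (one_mul a).symm⟩
      | one => exact ⟨1, Submonoid.one_mem _, 1, isUnit_one, (one_mul 1).symm⟩
      | mul x y _ _ ihx ihy =>
        obtain ⟨e₁, he₁, g₁, hg₁, rfl⟩ := ihx
        obtain ⟨e₂, he₂, g₂, hg₂, rfl⟩ := ihy
        obtain ⟨u₁, rfl⟩ := hg₁
        obtain ⟨u₂, rfl⟩ := hg₂
        refine ⟨e₁ * ((u₁ : M) * e₂ * ↑u₁⁻¹), ?_, ↑(u₁ * u₂), (u₁ * u₂).isUnit, ?_⟩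
        · exact Submonoid.mul_mem _ he₁ (conj_mem_closure_idem u₁ e₂ he₂)
        · simp [mul_assoc]
    · rintro x ⟨e, he, g, hg, rfl⟩
      exact Submonoid.mul_mem _ (hEle he) (hGmem g hg)
  · apply Set.Subset.antisymm
    · intro x hx
      induction hx using Submonoid.closure_induction with
      | mem a ha =>
        rcases ha with ha | ha
        · exact ⟨1, isUnit_one, a, Submonoid.subset_closure ha, (one_mul a).symm⟩
        · exact ⟨a, ha, 1, Submonoid.one_mem _, (mul_one a).symm⟩
      | one => exact ⟨1, isUnit_one, 1, Submonoid.one_mem _, (one_mul 1).symm⟩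
      | mul x y _ _ ihx ihy =>
        obtain ⟨g₁, hg₁, e₁, he₁, rfl⟩ := ihx
        obtain ⟨g₂, hg₂, e₂, he₂, rfl⟩ := ihy
        obtain ⟨u₁, rfl⟩ := hg₁
        obtain ⟨u₂, rfl⟩ := hg₂
        refine ⟨↑(u₁ * u₂), (u₁ * u₂).isUnit,
          (↑u₂⁻¹ * e₁ * ↑u₂) * e₂, ?_, ?_⟩
        · have := conj_mem_closure_idem u₂⁻¹ e₁ he₁
          simpa using Submonoid.mul_mem _ this he₂
        · simp [mul_assoc]
    · rintro x ⟨g, hg, e, he, rfl⟩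
      exact Submonoid.mul_mem _ (hGmem g hg) (hEle he)
end

section
/- Let M be a monoid with idempotent set E(M), unit set G(M), and left unit set G_L(M), and set F(M) = ⟨E(M) ∪ G(M)⟩. Then the submonoid ⟨E(M) ∪ G_L(M)⟩ is exactly the set of products f·g with f ∈ F(M) and g ∈ G_L(M). -/
/-- Moving a left unit across an element of `F(M)`. -/
lemma stmt_8_aux (M : Type*) [Monoid M] {f : M}
    (hf : f ∈ Submonoid.closure ({e : M | e * e = e} ∪ {g : M | IsUnit g})) :
    ∀ g : M, (∃ a, a * g = 1) →
      ∃ f' ∈ Submonoid.closure ({e : M | e * e = e} ∪ {g : M | IsUnit g}),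
        ∃ g' : M, (∃ a, a * g' = 1) ∧ g * f = f' * g' := by
  induction hf using Submonoid.closure_induction with
  | mem x hx =>
    rcases hx with he | hu
    · rintro g ⟨a, ha⟩
      refine ⟨g * x * a, Submonoid.subset_closure (Or.inl ?_), g, ⟨a, ha⟩, ?_⟩
      · show (g * x * a) * (g * x * a) = g * x * a
        calc (g * x * a) * (g * x * a) = g * x * ((a * g) * (x * a)) := by
              simp [mul_assoc]
          _ = g * x * a := by
              have he' : x * x = x := he
              rw [ha, one_mul, ← mul_assoc, mul_assoc g x x, he']
      · calc g * x = g * x * ((a * g)) := by rw [ha, mul_one]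
          _ = g * x * a * g := by simp [mul_assoc]
    · rintro g ⟨a, ha⟩
      refine ⟨1, one_mem _, g * x, ⟨(↑hu.unit⁻¹ : M) * a, ?_⟩, by rw [one_mul]⟩
      calc (↑hu.unit⁻¹ : M) * a * (g * x) = (↑hu.unit⁻¹ : M) * ((a * g) * x) := by
            simp [mul_assoc]
        _ = 1 := by rw [ha, one_mul]; exact hu.val_inv_mul
  | one => exact fun g hg => ⟨1, one_mem _, g, hg, by rw [mul_one, one_mul]⟩
  | mul x y hx hy ihx ihy =>
    rintro g hg
    obtain ⟨f₁, hf₁, g₁, hg₁, e₁⟩ := ihx g hg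
    obtain ⟨f₂, hf₂, g₂, hg₂, e₂⟩ := ihy g₁ hg₁
    refine ⟨f₁ * f₂, mul_mem hf₁ hf₂, g₂, hg₂, ?_⟩
    rw [← mul_assoc, e₁, mul_assoc, e₂, ← mul_assoc]

/-- `⟨E(M) ∪ G_L(M)⟩ = F(M) · G_L(M)`, where `F(M) = ⟨E(M) ∪ G(M)⟩`. -/
theorem stmt_8 (M : Type*) [Monoid M] :
    (Submonoid.closure ({e : M | e * e = e} ∪ {g : M | ∃ a, a * g = 1}) : Set M) =
      {x : M | ∃ f ∈ Submonoid.closure ({e : M | e * e = e} ∪ {g : M | IsUnit g}),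
        ∃ g : M, (∃ a, a * g = 1) ∧ x = f * g} := by
  ext x
  constructor
  · intro hx
    induction hx using Submonoid.closure_induction with
    | mem y hy =>
      rcases hy with he | hl
      · exact ⟨y, Submonoid.subset_closure (Or.inl he), 1, ⟨1, one_mul 1⟩, (mul_one y).symm⟩
      · exact ⟨1, one_mem _, y, hl, (one_mul y).symm⟩
    | one => exact ⟨1, one_mem _, 1, ⟨1, one_mul 1⟩, (one_mul 1).symm⟩
    | mul a b _ _ iha ihb =>
      obtain ⟨f₁, hf₁, g₁, hg₁, rfl⟩ := iha
      obtain ⟨f₂, hf₂, g₂, hg₂, rfl⟩ := ihb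
      obtain ⟨f', hf', g', hg', e⟩ := stmt_8_aux M hf₂ g₁ hg₁
      refine ⟨f₁ * f', mul_mem hf₁ hf', g' * g₂, ?_, ?_⟩
      · obtain ⟨a', ha'⟩ := hg'
        obtain ⟨a₂, ha₂⟩ := hg₂
        exact ⟨a₂ * a', by rw [mul_assoc, ← mul_assoc a', ha', one_mul, ha₂]⟩
      · calc f₁ * g₁ * (f₂ * g₂) = f₁ * (g₁ * f₂) * g₂ := by simp [mul_assoc]
          _ = f₁ * (f' * g') * g₂ := by rw [e]
          _ = f₁ * f' * (g' * g₂) := by simp [mul_assoc]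
  · rintro ⟨f, hf, g, hg, rfl⟩
    refine mul_mem ?_ (Submonoid.subset_closure (Or.inr hg))
    refine Submonoid.closure_mono ?_ hf
    apply Set.union_subset_union_right
    rintro u hu
    exact ⟨(↑hu.unit⁻¹ : M), hu.val_inv_mul⟩
end

section
/- Let M be a monoid and let F_L(M) = ⟨E(M) ∪ G_L(M)⟩ be the submonoid generated by the idempotents and the left units of M. For x ∈ F_L(M), there exists a ∈ F_L(M) with a·x = 1 if and only if x is a unit of M. In other words, the left units of the monoid F_L(M) are exactly the units of M. -/
/-- Any element of `⟨E(M) ∪ G_L(M)⟩` with a right inverse is a unit. -/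
lemma aux_right_inv_unit (M : Type*) [Monoid M] (a : M)
    (ha : a ∈ Submonoid.closure ({e : M | e * e = e} ∪ {g : M | ∃ a, a * g = 1})) :
    ∀ x : M, a * x = 1 → IsUnit a := by
  induction ha using Submonoid.closure_induction with
  | mem s hs =>
    intro x hx
    rcases hs with he | ⟨b, hb⟩
    · -- idempotent with right inverse is 1
      have : s = 1 := by
        calc s = s * (s * x) := by rw [hx, mul_one]
        _ = (s * s) * x := by rw [mul_assoc]
        _ = s * x := by rw [he]
        _ = 1 := hx
      exact this ▸ isUnit_one
    · -- left unit with a right inverse: the two inverses coincide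
      have hxb : x = b := by
        calc x = (b * s) * x := by rw [hb, one_mul]
        _ = b * (s * x) := by rw [mul_assoc]
        _ = b := by rw [hx, mul_one]
      exact ⟨⟨s, x, hx, hxb ▸ hb⟩, rfl⟩
  | one => intro _ _; exact isUnit_one
  | mul a b _ _ iha ihb =>
    intro x hx
    have hax : a * (b * x) = 1 := by rw [← mul_assoc]; exact hx
    have hua : IsUnit a := iha _ hax
    obtain ⟨u, hu⟩ := hua
    have hbxu : b * x = ↑u⁻¹ := by
      calc b * x = (↑u⁻¹ * a) * (b * x) := by rw [← hu, Units.inv_mul, one_mul]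
      _ = ↑u⁻¹ * (a * (b * x)) := by rw [mul_assoc]
      _ = ↑u⁻¹ := by rw [hax, mul_one]
    have hbx : b * (x * a) = 1 := by
      rw [← mul_assoc, hbxu, ← hu, Units.inv_mul]
    have hub : IsUnit b := ihb _ hbx
    exact IsUnit.mul ⟨u, hu⟩ hub

/-- The left units of the monoid `F_L(M) = ⟨E(M) ∪ G_L(M)⟩` are exactly the units of `M`. -/
theorem stmt_9 (M : Type*) [Monoid M] (x : M)
    (hx : x ∈ Submonoid.closure ({e : M | e * e = e} ∪ {g : M | ∃ a, a * g = 1})) :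
    (∃ a ∈ Submonoid.closure ({e : M | e * e = e} ∪ {g : M | ∃ a, a * g = 1}),
      a * x = 1) ↔ IsUnit x := by
  constructor
  · rintro ⟨a, ha, hax⟩
    obtain ⟨u, hu⟩ := aux_right_inv_unit M a ha x hax
    have hxu : x = ↑u⁻¹ := by
      calc x = (↑u⁻¹ * a) * x := by rw [← hu, Units.inv_mul, one_mul]
      _ = ↑u⁻¹ * (a * x) := by rw [mul_assoc]
      _ = ↑u⁻¹ := by rw [hax, mul_one]
    exact hxu ▸ (u⁻¹).isUnit
  · rintro ⟨u, rfl⟩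
    refine ⟨↑u⁻¹, ?_, u.inv_mul⟩
    exact Submonoid.subset_closure (Or.inr ⟨↑u, u.mul_inv⟩)
end

section
/- Let M be a monoid and let F_L(M) = ⟨E(M) ∪ G_L(M)⟩ be the submonoid generated by the idempotents and left units of M. If x is a left unit of M and x = x·u·x for some u ∈ F_L(M), then x is a unit of M. Consequently, no left unit of M that fails to be a unit is a regular element of F_L(M). -/
/-- Any element of `⟨E(M) ∪ G_L(M)⟩` having a right inverse is a unit. -/
theorem aux_right_inv_unit_s11 (M : Type*) [Monoid M] (v : M)
    (hv : v ∈ Submonoid.closure ({e : M | e * e = e} ∪ {g : M | ∃ a, a * g = 1}))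
    (h : ∃ y, v * y = 1) : IsUnit v := by
  induction hv using Submonoid.closure_induction with
  | mem s hs =>
    obtain ⟨y, hy⟩ := h
    rcases hs with he | ⟨b, hb⟩
    · -- idempotent with right inverse is 1
      have : s = 1 := by
        calc s = s * (s * y) := by rw [hy, mul_one]
        _ = (s * s) * y := by rw [mul_assoc]
        _ = s * y := by rw [he]
        _ = 1 := hy
      exact this ▸ isUnit_one
    · -- left unit with right inverse is a unit
      have hb' : b = y := by
        calc b = b * (s * y) := by rw [hy, mul_one]
        _ = (b * s) * y := by rw [mul_assoc]
        _ = y := by rw [hb, one_mul]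
      exact ⟨⟨s, y, hy, hb' ▸ hb⟩, rfl⟩
  | one => exact isUnit_one
  | mul s t hs ht ihs iht =>
    obtain ⟨y, hy⟩ := h
    have hsu : IsUnit s := ihs ⟨t * y, by rw [← mul_assoc]; exact hy⟩
    obtain ⟨S, rfl⟩ := hsu
    have hty : t * y = (↑S⁻¹ : M) := by
      calc t * y = (↑S⁻¹ : M) * ((S : M) * (t * y)) := by
            rw [← mul_assoc, Units.inv_mul, one_mul]
        _ = (↑S⁻¹ : M) := by rw [mul_assoc] at hy; rw [hy, mul_one]
    have htu : IsUnit t := iht ⟨y * (S : M), by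
      rw [← mul_assoc, hty, Units.inv_mul]⟩
    exact (Units.isUnit S).mul htu

/-- A left unit of `M` that is regular in `F_L(M) = ⟨E(M) ∪ G_L(M)⟩` is a unit of `M`. -/
theorem stmt_11 (M : Type*) [Monoid M] (x u : M)
    (hx : ∃ a, a * x = 1)
    (hu : u ∈ Submonoid.closure ({e : M | e * e = e} ∪ {g : M | ∃ a, a * g = 1}))
    (hxu : x = x * u * x) :
    IsUnit x := by
  obtain ⟨a, ha⟩ := hx
  have hux : u * x = 1 := by
    calc u * x = (a * x) * (u * x) := by rw [ha, one_mul]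
      _ = a * (x * u * x) := by rw [mul_assoc, ← mul_assoc x u x]
      _ = a * x := by rw [← hxu]
      _ = 1 := ha
  have huu : IsUnit u := aux_right_inv_unit_s11 M u hu ⟨x, hux⟩
  obtain ⟨U, rfl⟩ := huu
  have : x = (↑U⁻¹ : M) := by
    calc x = (↑U⁻¹ : M) * ((U : M) * x) := by rw [← mul_assoc, Units.inv_mul, one_mul]
      _ = (↑U⁻¹ : M) := by rw [hux, mul_one]
  exact this ▸ (Units.isUnit U⁻¹)
end

section
/- Let M be a monoid possessing a left unit that is not a unit, and suppose U ⊆ M generates M as a monoid. Then U contains an element u that is a left unit but not a unit and does not belong to F(M) = ⟨E(M) ∪ G(M)⟩, and U also contains an element v that is a right unit but not a unit and does not belong to F(M). -/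
/-- Elements `x` such that having a left inverse forces `x` to be a unit. -/
def leftGood (M : Type*) [Monoid M] : Submonoid M where
  carrier := {x | (∃ a, a * x = 1) → IsUnit x}
  one_mem' := fun _ => isUnit_one
  mul_mem' := by
    intro x y hx hy hxy
    obtain ⟨a, ha⟩ := hxy
    have hy' : IsUnit y := hy ⟨a * x, by rw [mul_assoc]; exact ha⟩
    obtain ⟨yu, rfl⟩ := hy'
    have hx' : IsUnit x := by
      refine hx ⟨(yu : M) * a, ?_⟩
      have h2 : a * x = ((yu⁻¹ : Mˣ) : M) := by
        have h3 := congrArg (· * ((yu⁻¹ : Mˣ) : M)) ha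
        simpa [mul_assoc] using h3
      rw [mul_assoc, h2]
      simp
    exact hx'.mul yu.isUnit

/-- Elements `x` such that having a right inverse forces `x` to be a unit. -/
def rightGood (M : Type*) [Monoid M] : Submonoid M where
  carrier := {x | (∃ b, x * b = 1) → IsUnit x}
  one_mem' := fun _ => isUnit_one
  mul_mem' := by
    intro x y hx hy hxy
    obtain ⟨b, hb⟩ := hxy
    have hx' : IsUnit x := hx ⟨y * b, by rw [← mul_assoc]; exact hb⟩
    obtain ⟨xu, rfl⟩ := hx'
    have hy' : IsUnit y := by
      refine hy ⟨b * (xu : M), ?_⟩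
      have h2 : y * b = ((xu⁻¹ : Mˣ) : M) := by
        have h3 := congrArg (((xu⁻¹ : Mˣ) : M) * ·) hb
        simpa [← mul_assoc] using h3
      rw [← mul_assoc, h2]
      simp
    exact xu.isUnit.mul hy'

theorem genSubset_leftGood (M : Type*) [Monoid M] :
    ({e : M | e * e = e} ∪ {g : M | IsUnit g}) ⊆ (leftGood M : Set M) := by
  rintro x (hx | hx)
  · rintro ⟨a, ha⟩
    have : x = 1 := by
      calc x = (a * x) * x := by rw [ha, one_mul]
      _ = a * (x * x) := by rw [mul_assoc]
      _ = 1 := by rw [hx, ha]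
    simp [this]
  · exact fun _ => hx

theorem genSubset_rightGood (M : Type*) [Monoid M] :
    ({e : M | e * e = e} ∪ {g : M | IsUnit g}) ⊆ (rightGood M : Set M) := by
  rintro x (hx | hx)
  · rintro ⟨b, hb⟩
    have : x = 1 := by
      calc x = x * (x * b) := by rw [hb, mul_one]
      _ = (x * x) * b := by rw [mul_assoc]
      _ = 1 := by rw [hx, hb]
    simp [this]
  · exact fun _ => hx

/-- If `M` has a left unit that is not a unit and `U` generates `M`, then `U` contains a
left-but-not-two-sided unit outside `F(M) = ⟨E(M) ∪ G(M)⟩`, and likewise a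
right-but-not-two-sided unit outside `F(M)`. -/
theorem stmt_12 (M : Type*) [Monoid M]
    (h : ∃ w : M, (∃ a, a * w = 1) ∧ ¬ IsUnit w)
    (U : Set M) (hU : Submonoid.closure U = ⊤) :
    (∃ u ∈ U, (∃ a, a * u = 1) ∧ ¬ IsUnit u ∧
      u ∉ Submonoid.closure ({e : M | e * e = e} ∪ {g : M | IsUnit g})) ∧
    (∃ v ∈ U, (∃ b, v * b = 1) ∧ ¬ IsUnit v ∧
      v ∉ Submonoid.closure ({e : M | e * e = e} ∪ {g : M | IsUnit g})) := by
  obtain ⟨w, ⟨a, haw⟩, hwu⟩ := h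
  have hFL : Submonoid.closure ({e : M | e * e = e} ∪ {g : M | IsUnit g}) ≤ leftGood M :=
    Submonoid.closure_le.2 (genSubset_leftGood M)
  have hFR : Submonoid.closure ({e : M | e * e = e} ∪ {g : M | IsUnit g}) ≤ rightGood M :=
    Submonoid.closure_le.2 (genSubset_rightGood M)
  constructor
  · -- left part: U ⊄ leftGood, since w ∉ leftGood
    by_contra hcon
    push_neg at hcon
    have hsub : U ⊆ (leftGood M : Set M) := by
      intro u hu
      intro hlu
      by_contra hnu
      have := hcon u hu hlu hnu
      exact hnu (hFL this hlu)
    have : w ∈ leftGood M := by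
      have : w ∈ Submonoid.closure U := by rw [hU]; trivial
      exact Submonoid.closure_le.2 hsub this
    exact hwu (this ⟨a, haw⟩)
  · -- right part: a is a right unit that is not a unit, so U ⊄ rightGood
    have hau : ¬ IsUnit a := by
      intro ha
      obtain ⟨au, rfl⟩ := ha
      exact hwu ⟨au⁻¹, by
        have := congrArg (((au⁻¹ : Mˣ) : M) * ·) haw
        simpa [← mul_assoc] using this.symm⟩
    by_contra hcon
    push_neg at hcon
    have hsub : U ⊆ (rightGood M : Set M) := by
      intro v hv
      intro hrv
      by_contra hnv
      have := hcon v hv hrv hnv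
      exact hnv (hFR this hrv)
    have : a ∈ rightGood M := by
      have : a ∈ Submonoid.closure U := by rw [hU]; trivial
      exact Submonoid.closure_le.2 hsub this
    exact hau (this ⟨w, haw⟩)
end

section
/- Let M be a monoid possessing a left unit that is not a unit, let F(M) = ⟨E(M) ∪ G(M)⟩, and suppose U ⊆ M is such that F(M) ∪ U generates M as a monoid. Then U contains two distinct elements x and y such that x is a left unit but not a unit and y is a right unit but not a unit. In particular, any such U has at least two elements, so the relative rank of M modulo each of G(M), ⟨E(M)⟩, and F(M) is at least 2. -/
/-- The relative rank of a monoid `M` modulo a subset `A`: the least cardinality of a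
subset `U ⊆ M` with `⟨A ∪ U⟩ = M`. -/
noncomputable def relRank {M : Type*} [Monoid M] (A : Set M) : Cardinal :=
  ⨅ U : {U : Set M // Submonoid.closure (A ∪ U) = ⊤}, Cardinal.mk U.1

open Submonoid

private lemma unit_of_left_right {M : Type*} [Monoid M] {x a b : M}
    (ha : a * x = 1) (hb : x * b = 1) : IsUnit x := by
  have hab : a = b := by
    calc a = a * (x * b) := by rw [hb, mul_one]
    _ = (a * x) * b := by rw [mul_assoc]
    _ = b := by rw [ha, one_mul]
  exact ⟨⟨x, a, by rw [hab]; exact hb, ha⟩, rfl⟩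

/-- The set of elements that are not "left units which fail to be units". -/
private def notLeftS (M : Type*) [Monoid M] : Submonoid M where
  carrier := {x | (∃ a, a * x = 1) → IsUnit x}
  one_mem' := fun _ => isUnit_one
  mul_mem' := by
    intro x y hx hy hxy
    obtain ⟨c, hc⟩ := hxy
    have hc' : (c * x) * y = 1 := by rw [mul_assoc]; exact hc
    have hy' : IsUnit y := hy ⟨c * x, hc'⟩
    obtain ⟨u, hu⟩ := id hy'
    subst hu
    have hcx : c * x = ↑u⁻¹ := by
      calc c * x = (c * x) * (↑u * ↑u⁻¹) := by rw [Units.mul_inv, mul_one]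
      _ = ((c * x) * ↑u) * ↑u⁻¹ := (mul_assoc _ _ _).symm
      _ = ↑u⁻¹ := by rw [hc', one_mul]
    have hx' : IsUnit x := hx ⟨↑u * c, by rw [mul_assoc, hcx, Units.mul_inv]⟩
    exact hx'.mul hy' 

/-- The set of elements that are not "right units which fail to be units". -/
private def notRightS (M : Type*) [Monoid M] : Submonoid M where
  carrier := {x | (∃ b, x * b = 1) → IsUnit x}
  one_mem' := fun _ => isUnit_one
  mul_mem' := by
    intro x y hx hy hxy
    obtain ⟨c, hc⟩ := hxy
    have hc' : x * (y * c) = 1 := by rw [← mul_assoc]; exact hc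
    have hx' : IsUnit x := hx ⟨y * c, hc'⟩
    obtain ⟨u, hu⟩ := id hx'
    subst hu
    have hyc : y * c = ↑u⁻¹ := by
      calc y * c = (↑u⁻¹ * ↑u) * (y * c) := by rw [Units.inv_mul, one_mul]
      _ = ↑u⁻¹ * (↑u * (y * c)) := by rw [mul_assoc]
      _ = ↑u⁻¹ := by rw [hc', mul_one]
    have hy' : IsUnit y := hy ⟨c * ↑u, by rw [← mul_assoc, hyc, Units.inv_mul]⟩
    exact hx'.mul hy'

private lemma EG_sub_notLeft {M : Type*} [Monoid M] :
    {e : M | e * e = e} ∪ {g : M | IsUnit g} ⊆ (notLeftS M : Set M) := by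
  rintro z (hz | hz)
  · rintro ⟨c, hc⟩
    have : z = 1 := by
      calc z = 1 * z := (one_mul z).symm
      _ = (c * z) * z := by rw [hc]
      _ = c * (z * z) := by rw [mul_assoc]
      _ = c * z := by rw [hz]
      _ = 1 := hc
    rw [this]; exact isUnit_one
  · exact fun _ => hz

private lemma EG_sub_notRight {M : Type*} [Monoid M] :
    {e : M | e * e = e} ∪ {g : M | IsUnit g} ⊆ (notRightS M : Set M) := by
  rintro z (hz | hz)
  · rintro ⟨c, hc⟩
    have : z = 1 := by
      calc z = z * 1 := (mul_one z).symm
      _ = z * (z * c) := by rw [hc]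
      _ = (z * z) * c := by rw [mul_assoc]
      _ = z * c := by rw [hz]
      _ = 1 := hc
    rw [this]; exact isUnit_one
  · exact fun _ => hz

/-- The key lemma: the first conjunct of the theorem. -/
private lemma key {M : Type*} [Monoid M]
    (h : ∃ w : M, (∃ a, a * w = 1) ∧ ¬ IsUnit w)
    (U : Set M)
    (hU : Submonoid.closure
      ((Submonoid.closure ({e : M | e * e = e} ∪ {g : M | IsUnit g}) : Set M) ∪ U) = ⊤) :
    ∃ x ∈ U, ∃ y ∈ U, x ≠ y ∧ ((∃ a, a * x = 1) ∧ ¬ IsUnit x) ∧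
      ((∃ b, y * b = 1) ∧ ¬ IsUnit y) := by
  obtain ⟨w, ⟨a, haw⟩, hw⟩ := h
  -- a is a right unit which is not a unit
  have ha : ¬ IsUnit a := by
    rintro ⟨u, hu⟩
    apply hw
    subst hu
    have hwv : w = ↑u⁻¹ := by
      calc w = (↑u⁻¹ * ↑u) * w := by rw [Units.inv_mul, one_mul]
      _ = ↑u⁻¹ * (↑u * w) := by rw [mul_assoc]
      _ = ↑u⁻¹ := by rw [haw, mul_one]
    rw [hwv]; exact (u⁻¹).isUnit
  -- find x ∈ U which is a left unit, not a unit
  have hx : ∃ x ∈ U, (∃ c, c * x = 1) ∧ ¬ IsUnit x := by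
    by_contra hcon
    push_neg at hcon
    have hsub : Submonoid.closure
        ((Submonoid.closure ({e : M | e * e = e} ∪ {g : M | IsUnit g}) : Set M) ∪ U)
        ≤ notLeftS M := by
      rw [Submonoid.closure_le]
      rintro z (hz | hz)
      · exact (Submonoid.closure_le.mpr EG_sub_notLeft) hz
      · intro hlz
        exact hcon z hz hlz
    have : w ∈ notLeftS M := hsub (hU ▸ Submonoid.mem_top w)
    exact hw (this ⟨a, haw⟩)
  have hy : ∃ y ∈ U, (∃ c, y * c = 1) ∧ ¬ IsUnit y := by
    by_contra hcon
    push_neg at hcon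
    have hsub : Submonoid.closure
        ((Submonoid.closure ({e : M | e * e = e} ∪ {g : M | IsUnit g}) : Set M) ∪ U)
        ≤ notRightS M := by
      rw [Submonoid.closure_le]
      rintro z (hz | hz)
      · exact (Submonoid.closure_le.mpr EG_sub_notRight) hz
      · intro hlz
        exact hcon z hz hlz
    have : a ∈ notRightS M := hsub (hU ▸ Submonoid.mem_top a)
    exact ha (this ⟨w, haw⟩)
  obtain ⟨x, hxU, hxl, hxu⟩ := hx
  obtain ⟨y, hyU, hyr, hyu⟩ := hy
  refine ⟨x, hxU, y, hyU, ?_, ⟨hxl, hxu⟩, ⟨hyr, hyu⟩⟩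
  rintro rfl
  obtain ⟨c, hc⟩ := hxl
  obtain ⟨d, hd⟩ := hyr
  exact hxu (unit_of_left_right hc hd)

private lemma card_two {M : Type*} [Monoid M]
    (h : ∃ w : M, (∃ a, a * w = 1) ∧ ¬ IsUnit w)
    (U : Set M)
    (hU : Submonoid.closure
      ((Submonoid.closure ({e : M | e * e = e} ∪ {g : M | IsUnit g}) : Set M) ∪ U) = ⊤) :
    2 ≤ Cardinal.mk U := by
  obtain ⟨x, hxU, y, hyU, hxy, -, -⟩ := key h U hU
  rw [Cardinal.two_le_iff]
  exact ⟨⟨x, hxU⟩, ⟨y, hyU⟩, by simpa using hxy⟩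

/-- If `M` has a left unit that is not a unit and `F(M) ∪ U` generates `M`, then `U`
contains two distinct elements, one a left-but-not-two-sided unit and one a
right-but-not-two-sided unit; hence the relative rank of `M` modulo each of
`G(M)`, `⟨E(M)⟩` and `F(M)` is at least `2`. -/
theorem stmt_13 {M : Type*} [Monoid M]
    (h : ∃ w : M, (∃ a, a * w = 1) ∧ ¬ IsUnit w)
    (U : Set M)
    (hU : Submonoid.closure
      ((Submonoid.closure ({e : M | e * e = e} ∪ {g : M | IsUnit g}) : Set M) ∪ U) = ⊤) :
    (∃ x ∈ U, ∃ y ∈ U, x ≠ y ∧ ((∃ a, a * x = 1) ∧ ¬ IsUnit x) ∧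
      ((∃ b, y * b = 1) ∧ ¬ IsUnit y)) ∧
    2 ≤ Cardinal.mk U ∧
    2 ≤ relRank {g : M | IsUnit g} ∧
    2 ≤ relRank ((Submonoid.closure {e : M | e * e = e} : Set M)) ∧
    2 ≤ relRank ((Submonoid.closure ({e : M | e * e = e} ∪ {g : M | IsUnit g}) : Set M)) := by
  have main : ∀ A : Set M,
      A ⊆ (Submonoid.closure ({e : M | e * e = e} ∪ {g : M | IsUnit g}) : Set M) →
      2 ≤ relRank A := by
    intro A hA
    rw [relRank]
    have : Nonempty {V : Set M // Submonoid.closure (A ∪ V) = ⊤} :=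
      ⟨Set.univ, by rw [Set.union_univ, Submonoid.closure_univ]⟩
    refine le_ciInf fun V => ?_
    obtain ⟨V, hV⟩ := V
    refine card_two h V ?_
    rw [eq_top_iff, ← hV]
    exact Submonoid.closure_mono (Set.union_subset_union_left _ hA)
  refine ⟨key h U hU, card_two h U hU, ?_, ?_, ?_⟩
  · exact main _ fun g hg => Submonoid.subset_closure (Or.inr hg)
  · exact main _ (Submonoid.closure_mono Set.subset_union_left)
  · exact main _ le_rfl
end

section
/- Let M be a monoid in which every left unit is a unit, and suppose U ⊆ M generates M as a monoid. Then every unit of M lies in the submonoid generated by the set of units belonging to U; that is, G(M) is generated by G(M) ∩ U. -/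
/-- In a monoid all of whose left units are units, if `U` generates `M`, then the
group of units is generated by `G(M) ∩ U`. -/
theorem stmt_14 (M : Type*) [Monoid M]
    (h : ∀ x : M, (∃ a, a * x = 1) → IsUnit x)
    (U : Set M) (hU : Submonoid.closure U = ⊤) :
    ∀ g : M, IsUnit g → g ∈ Submonoid.closure ({x : M | IsUnit x} ∩ U) := by
  intro g
  have hg : g ∈ Submonoid.closure U := by rw [hU]; trivial
  induction hg using Submonoid.closure_induction with
  | mem u hu => intro hug; exact Submonoid.subset_closure ⟨hug, hu⟩
  | one => intro _; exact Submonoid.one_mem _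
  | mul x y hx hy ihx ihy =>
    intro hxy
    obtain ⟨v, hv⟩ := hxy.exists_left_inv
    have hyu : IsUnit y := h y ⟨v * x, by rw [mul_assoc]; exact hv⟩
    have hxu : IsUnit x := by
      obtain ⟨u, rfl⟩ := hyu
      have hx' : x = (x * ↑u) * ↑u⁻¹ := by
        rw [mul_assoc]; simp
      rw [hx']
      exact hxy.mul u⁻¹.isUnit
    exact Submonoid.mul_mem _ (ihx hxu) (ihy hyu)
end

section
/- Let M be a monoid in which every left unit is a unit, and suppose M has a unit different from the identity. Let E(M) be the set of idempotents, G(M) the set of units, F(M) = ⟨E(M) ∪ G(M)⟩, and let U ⊆ M. Set U₁ = G(M) ∩ U and U₂ = U \ G(M). Then E(M) ∪ U generates M as a monoid if and only if U₁ generates the submonoid G(M) (i.e., every unit lies in ⟨U₁⟩) and F(M) ∪ U₂ generates M. -/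
/-- Suppose every left unit of `M` is a unit and `M` has a non-identity unit.  For
`U ⊆ M`, with `U₁ = G(M) ∩ U` and `U₂ = U \ G(M)`: `E(M) ∪ U` generates `M` iff
`U₁` generates `G(M)` and `F(M) ∪ U₂` generates `M`. -/
theorem stmt_15 (M : Type*) [Monoid M]
    (h : ∀ x : M, (∃ a, a * x = 1) → IsUnit x)
    (h1 : ∃ g : M, IsUnit g ∧ g ≠ 1)
    (U : Set M) :
    Submonoid.closure ({e : M | e * e = e} ∪ U) = ⊤ ↔
      ({x : M | IsUnit x} ⊆ ↑(Submonoid.closure ({x : M | IsUnit x} ∩ U)) ∧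
        Submonoid.closure
          ((Submonoid.closure ({e : M | e * e = e} ∪ {g : M | IsUnit g}) : Set M) ∪
            (U \ {x : M | IsUnit x})) = ⊤) := by
  constructor
  · intro hcl
    constructor
    · intro g hg
      have hgmem : g ∈ Submonoid.closure ({e : M | e * e = e} ∪ U) := by
        rw [hcl]; trivial
      have key : ∀ x ∈ Submonoid.closure ({e : M | e * e = e} ∪ U),
          IsUnit x → x ∈ Submonoid.closure ({x : M | IsUnit x} ∩ U) := by
        intro x hx
        induction hx using Submonoid.closure_induction with
        | mem y hy =>
          intro hu
          rcases hy with hy | hy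
          · rcases hu with ⟨u, rfl⟩
            have hu1 : u * u = u := Units.ext (by simpa using hy)
            have : u = 1 := by
              have := mul_left_cancel (a := u) (b := u) (c := 1)
                (by rw [hu1, mul_one])
              exact this
            rw [this]
            simpa using Submonoid.one_mem _
          · exact Submonoid.subset_closure ⟨hu, hy⟩
        | one =>
          intro _
          exact Submonoid.one_mem _
        | mul x y hx hy ihx ihy =>
          intro hu
          have hyu : IsUnit y := by
            obtain ⟨u, hu'⟩ := hu
            refine h y ⟨(↑u⁻¹ : M) * x, ?_⟩
            rw [mul_assoc, ← hu', Units.inv_mul]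
          have hxu : IsUnit x := by
            have := hu.mul (hyu.unit⁻¹).isUnit
            rwa [mul_assoc, Units.mul_inv_eq_one.mpr (IsUnit.unit_spec hyu).symm,
              mul_one] at this
          exact Submonoid.mul_mem _ (ihx hxu) (ihy hyu)
      exact key g hgmem hg
    · rw [eq_top_iff, ← hcl]
      refine Submonoid.closure_le.mpr ?_
      rintro x (hx | hx)
      · exact Submonoid.subset_closure
          (Or.inl (Submonoid.subset_closure (Or.inl hx)))
      · by_cases hux : IsUnit x
        · exact Submonoid.subset_closure
            (Or.inl (Submonoid.subset_closure (Or.inr hux)))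
        · exact Submonoid.subset_closure (Or.inr ⟨hx, hux⟩)
  · rintro ⟨hG, hF⟩
    rw [eq_top_iff, ← hF]
    refine Submonoid.closure_le.mpr ?_
    rintro x (hx | hx)
    · -- x ∈ closure (E ∪ G)
      have hle : Submonoid.closure ({e : M | e * e = e} ∪ {g : M | IsUnit g}) ≤
          Submonoid.closure ({e : M | e * e = e} ∪ U) := by
        refine Submonoid.closure_le.mpr ?_
        rintro y (hy | hy)
        · exact Submonoid.subset_closure (Or.inl hy)
        · exact Submonoid.closure_mono
            (Set.inter_subset_right.trans Set.subset_union_right) (hG hy)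
      exact hle hx
    · exact Submonoid.subset_closure (Or.inr hx.1)
end

section
/- Let M be a monoid in which every left unit is a unit, and suppose M has a unit different from the identity. Then, as an equation of cardinals, the relative rank of M modulo E(M) equals the rank of the group of units G(M) plus the relative rank of M modulo F(M): rank(M : E(M)) = rank(G(M)) + rank(M : F(M)). -/
/-- The rank of the group of units of `M`: the least cardinality of a subset
`V ⊆ G(M)` generating all units. -/
noncomputable def unitRank (M : Type*) [Monoid M] : Cardinal :=
  ⨅ V : {V : Set M // V ⊆ {x : M | IsUnit x} ∧
    {x : M | IsUnit x} ⊆ ↑(Submonoid.closure V)}, Cardinal.mk V.1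

open Cardinal Submonoid

section

variable {M : Type*} [Monoid M]

theorem relRank_le_mk {A U : Set M} (hU : closure (A ∪ U) = ⊤) : relRank A ≤ #U :=
  ciInf_le' (fun U : {U : Set M // closure (A ∪ U) = ⊤} => #U.1) ⟨U, hU⟩

theorem exists_relRank_eq (A : Set M) : ∃ U : Set M, closure (A ∪ U) = ⊤ ∧ #U = relRank A := by
  have : Nonempty {U : Set M // closure (A ∪ U) = ⊤} :=
    ⟨⟨Set.univ, by rw [Set.union_univ, Submonoid.closure_univ]⟩⟩
  obtain ⟨⟨U, hU⟩, hmk⟩ := ciInf_mem fun U : {U : Set M // closure (A ∪ U) = ⊤} => #U.1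
  exact ⟨U, hU, hmk⟩

theorem unitRank_le_mk {V : Set M} (hV : V ⊆ {x | IsUnit x})
    (hgen : {x : M | IsUnit x} ⊆ closure V) : unitRank M ≤ #V :=
  ciInf_le' (fun V : {V : Set M // V ⊆ {x | IsUnit x} ∧ {x : M | IsUnit x} ⊆ closure V} => #V.1)
    ⟨V, hV, hgen⟩

variable (M) in
theorem exists_unitRank_eq : ∃ V : Set M, V ⊆ {x | IsUnit x} ∧
    {x : M | IsUnit x} ⊆ closure V ∧ #V = unitRank M := by
  have : Nonempty {V : Set M // V ⊆ {x | IsUnit x} ∧ {x : M | IsUnit x} ⊆ closure V} :=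
    ⟨⟨{x | IsUnit x}, le_rfl, subset_closure⟩⟩
  obtain ⟨⟨V, hV, hgen⟩, hmk⟩ :=
    ciInf_mem fun V : {V : Set M // V ⊆ {x | IsUnit x} ∧ {x : M | IsUnit x} ⊆ closure V} => #V.1
  exact ⟨V, hV, hgen, hmk⟩

theorem isDedekindFiniteMonoid_of_isUnit_of_mul_eq_one
    (h : ∀ x : M, (∃ a, a * x = 1) → IsUnit x) : IsDedekindFiniteMonoid M where
  mul_eq_one_symm {a b} hab := by
    obtain ⟨u, rfl⟩ := h b ⟨a, hab⟩
    rw [← u.inv_eq_of_mul_eq_one_left hab, u.mul_inv]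

theorem relRank_le_unitRank_add_relRank_closure (A : Set M) :
    relRank A ≤ unitRank M + relRank (closure (A ∪ {g : M | IsUnit g}) : Set M) := by
  obtain ⟨V, -, hVgen, hV⟩ := exists_unitRank_eq M
  obtain ⟨W, hW, hW'⟩ := exists_relRank_eq (closure (A ∪ {g : M | IsUnit g}) : Set M)
  have hgen : closure (A ∪ (V ∪ W)) = ⊤ := by
    rw [eq_top_iff, ← hW, closure_le, Set.union_subset_iff, SetLike.coe_subset_coe, closure_le,
      Set.union_subset_iff]
    refine ⟨⟨subset_closure.trans (closure_mono ?_), hVgen.trans (closure_mono ?_)⟩,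
      subset_closure.trans (closure_mono ?_)⟩ <;> intro x hx <;> simp [hx]
  calc relRank A ≤ #(V ∪ W : Set M) := relRank_le_mk hgen
    _ ≤ #V + #W := mk_union_le V W
    _ = _ := by rw [hV, hW']

theorem mem_closure_inter_of_isUnit [IsDedekindFiniteMonoid M] {S : Set M} {x : M}
    (hx : x ∈ closure S) (hu : IsUnit x) : x ∈ closure (S ∩ {g | IsUnit g}) := by
  revert hu
  induction hx using closure_induction with
  | mem y hy => exact fun hu => subset_closure ⟨hy, hu⟩
  | one => exact fun _ => one_mem _
  | mul y z _ _ ihy ihz =>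
    intro hu
    obtain ⟨hy, hz⟩ := IsUnit.mul_iff.mp hu
    exact mul_mem (ihy hy) (ihz hz)

theorem unitRank_add_relRank_closure_le [IsDedekindFiniteMonoid M] :
    unitRank M + relRank (closure ({e : M | e * e = e} ∪ {g | IsUnit g}) : Set M) ≤
      relRank {e : M | e * e = e} := by
  set E := {e : M | e * e = e}
  set G := {g : M | IsUnit g}
  obtain ⟨U, hU, hU'⟩ := exists_relRank_eq E
  have hunits : G ⊆ closure (U ∩ G) := by
    intro g hg
    refine closure_le.mpr ?_ (mem_closure_inter_of_isUnit (hU ▸ mem_top g) hg)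
    rintro x ⟨hx | hx, hxG⟩
    · rw [(IsIdempotentElem.iff_eq_one_of_isUnit hxG).mp hx]
      exact one_mem _
    · exact subset_closure ⟨hx, hxG⟩
  have hnonunits : closure ((closure (E ∪ G) : Set M) ∪ (U \ G)) = ⊤ := by
    rw [eq_top_iff, ← hU, closure_le]
    rintro x (hx | hx)
    · exact subset_closure (Or.inl (subset_closure (Or.inl hx)))
    · by_cases hxG : x ∈ G
      · exact subset_closure (Or.inl (subset_closure (Or.inr hxG)))
      · exact subset_closure (Or.inr ⟨hx, hxG⟩)
  calc unitRank M + relRank (closure (E ∪ G) : Set M) ≤ #(U ∩ G : Set M) + #(U \ G : Set M) :=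
        add_le_add (unitRank_le_mk Set.inter_subset_right hunits) (relRank_le_mk hnonunits)
    _ = #U := by rw [← mk_union_of_disjoint Set.disjoint_sdiff_inter.symm, Set.inter_union_sdiff]
    _ = relRank E := hU'

end

theorem stmt_16_general (M : Type*) [Monoid M]
    (h : ∀ x : M, (∃ a, a * x = 1) → IsUnit x) :
    relRank {e : M | e * e = e} =
      unitRank M +
        relRank ((Submonoid.closure ({e : M | e * e = e} ∪ {g : M | IsUnit g}) : Set M)) := by
  have := isDedekindFiniteMonoid_of_isUnit_of_mul_eq_one h
  exact le_antisymm (relRank_le_unitRank_add_relRank_closure _) unitRank_add_relRank_closure_le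

/-- If every left unit of `M` is a unit and `M` has a non-identity unit, then
`rank(M : E(M)) = rank(G(M)) + rank(M : F(M))`. -/
theorem stmt_16 (M : Type*) [Monoid M]
    (h : ∀ x : M, (∃ a, a * x = 1) → IsUnit x)
    (h1 : ∃ g : M, IsUnit g ∧ g ≠ 1) :
    relRank {e : M | e * e = e} =
      unitRank M +
        relRank ((Submonoid.closure ({e : M | e * e = e} ∪ {g : M | IsUnit g}) : Set M)) :=
  stmt_16_general M h
end

section
/- Let M be a monoid and x ∈ M. If x = g·e for some left unit g and some idempotent e of M, then x is right-unit regular: there exists a right unit a of M with x = x·a·x. -/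
/-- A left unit times an idempotent is right-unit regular. -/
theorem stmt_18 (M : Type*) [Monoid M] (x g e : M)
    (hg : ∃ a, a * g = 1) (he : e * e = e) (hx : x = g * e) :
    ∃ a : M, (∃ b, a * b = 1) ∧ x = x * a * x := by
  obtain ⟨a, ha⟩ := hg
  refine ⟨a, ⟨g, ha⟩, ?_⟩
  subst hx
  calc g * e = g * (e * e) := by rw [he]
    _ = g * (e * ((a * g) * e)) := by rw [ha, one_mul]
    _ = g * e * a * (g * e) := by simp [mul_assoc]
end
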